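/- arXiv:2603.12518 — 2 statements merged into one kernel-verified Lean document; each statement's English description precedes it below -/
import Mathlib

section
/- Let ε₁,…,ε_n be i.i.d. real random variables independent of the fixed Hilbert-space elements X₁,…,X_n, with E[εᵢ] = 0 and variance σ² < ∞. Let U_n = n^{-1} Σᵢ (Xᵢ − X̄)(εᵢ − ε̄) and let γ̂_J^{-1/2} = Σ_{j=1}^J γ̂_j^{-1/2} φ̂_j ⊗ φ̂_j with (γ̂_j, φ̂_j) eigenpairs of the sample covariance operator γ̂ (assuming γ̂_j > 0 for j ≤ J). Then E[‖γ̂_J^{-1/2} U_n‖²] = σ² J / n. -/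
/-!
In the eigenbasis, `⟨U_n, φ̂_j⟩ = n⁻¹ Σᵢ ⟨Xᵢ − X̄, φ̂_j⟩ εᵢ` (the `ε̄` term drops out because the
centred regressors sum to zero), so by independence its second moment is
`σ² n⁻² Σᵢ ⟨Xᵢ − X̄, φ̂_j⟩² = σ² ⟨γ̂ φ̂_j, φ̂_j⟩ / n = σ² γ̂_j / n`. Since
`‖γ̂_J^{-1/2} U_n‖² = Σ_{j ≤ J} γ̂_j⁻¹ ⟨U_n, φ̂_j⟩²`, each of the `J` eigendirections
contributes exactly `σ² / n`.
-/

open MeasureTheory ProbabilityTheory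
open scoped RealInnerProductSpace

/-- The rank-one operator `x ⊗ y : z ↦ ⟨z, x⟩ y` on a real inner product space. -/
noncomputable def rankOne {H : Type*} [NormedAddCommGroup H] [InnerProductSpace ℝ H]
    (x y : H) : H →L[ℝ] H := (innerSL ℝ x).smulRight y

section InnerProductSpace

variable {H : Type*} [NormedAddCommGroup H] [InnerProductSpace ℝ H] {ι : Type*}

@[simp]
lemma rankOne_apply (x y z : H) : rankOne x y z = ⟪z, x⟫ • y := by
  simp only [rankOne, ContinuousLinearMap.smulRight_apply, innerSL_apply_apply, real_inner_comm]

lemma inner_sum_rankOne_self_apply (s : Finset ι) (Y : ι → H) (v : H) :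
    ⟪(∑ i ∈ s, rankOne (Y i) (Y i)) v, v⟫ = ∑ i ∈ s, ⟪Y i, v⟫ ^ 2 := by
  simp only [FunLike.coe_sum, Finset.sum_apply, rankOne_apply, sum_inner, real_inner_smul_left]
  simp only [real_inner_comm v, sq]

lemma Orthonormal.norm_sum_smul_rankOne_apply_sq [Fintype ι] {φ : ι → H}
    (hφ : Orthonormal ℝ φ) (c : ι → ℝ) (u : H) :
    ‖(∑ j, c j • rankOne (φ j) (φ j)) u‖ ^ 2 = ∑ j, c j ^ 2 * ⟪u, φ j⟫ ^ 2 := by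
  have hexpand : (∑ j, c j • rankOne (φ j) (φ j)) u = ∑ j, (c j * ⟪u, φ j⟫) • φ j := by
    simp only [FunLike.coe_sum, Finset.sum_apply, FunLike.coe_smul, Pi.smul_apply, rankOne_apply,
      smul_smul]
  rw [hexpand, ← real_inner_self_eq_norm_sq, hφ.inner_sum]
  exact Finset.sum_congr rfl fun j _ => by rw [conj_trivial]; ring

end InnerProductSpace

section Centring

variable {E : Type*} [AddCommGroup E] [Module ℝ E] {ι : Type*}

lemma sum_sub_card_inv_smul_sum [Fintype ι] [Nonempty ι] (X : ι → E) :
    ∑ i, (X i - (Fintype.card ι : ℝ)⁻¹ • ∑ k, X k) = 0 := by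
  have hcard : (Fintype.card ι : ℝ) ≠ 0 := Nat.cast_ne_zero.2 Fintype.card_ne_zero
  rw [Finset.sum_sub_distrib, Finset.sum_const, Finset.card_univ, ← Nat.cast_smul_eq_nsmul ℝ,
    smul_smul, mul_inv_cancel₀ hcard, one_smul, sub_self]

lemma sum_sub_smul_of_sum_eq_zero (s : Finset ι) {Y : ι → E} (hY : ∑ i ∈ s, Y i = 0)
    (e : ι → ℝ) (m : ℝ) : ∑ i ∈ s, (e i - m) • Y i = ∑ i ∈ s, e i • Y i := by
  simp only [sub_smul, Finset.sum_sub_distrib, ← Finset.smul_sum, hY, smul_zero, sub_zero]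

end Centring

lemma integral_sq_sum_const_mul_of_iIndepFun {Ω ι : Type*} [MeasurableSpace Ω] [Fintype ι]
    {P : Measure Ω} [IsFiniteMeasure P] {ε : ι → Ω → ℝ} (hindep : iIndepFun ε P)
    (hL2 : ∀ i, MemLp (ε i) 2 P) {σ : ℝ} (hmean : ∀ i, ∫ ω, ε i ω ∂P = 0)
    (hvar : ∀ i, ∫ ω, ε i ω ^ 2 ∂P = σ ^ 2) (c : ι → ℝ) :
    ∫ ω, (∑ i, c i * ε i ω) ^ 2 ∂P = σ ^ 2 * ∑ i, c i ^ 2 := by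
  set Z : ι → Ω → ℝ := fun i ω => c i * ε i ω
  have hZ : ∀ i, MemLp (Z i) 2 P := fun i => (hL2 i).const_mul (c i)
  have hZmean : ∀ i, ∫ ω, Z i ω ∂P = 0 := fun i => by simp [Z, integral_const_mul, hmean]
  have hsum_mean : ∫ ω, ∑ i, Z i ω ∂P = 0 := by
    rw [integral_finsetSum _ fun i _ => (hZ i).integrable one_le_two]
    simp [hZmean]
  have hpair : Set.Pairwise ↑(Finset.univ : Finset ι) fun i k => IndepFun (Z i) (Z k) P :=
    fun i _ k _ hik => (hindep.indepFun hik).comp (measurable_const_mul (c i))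
      (measurable_const_mul (c k))
  calc ∫ ω, (∑ i, Z i ω) ^ 2 ∂P
      = variance (∑ i, Z i) P := by
        rw [variance_of_integral_eq_zero (memLp_finsetSum' _ fun i _ => hZ i).aemeasurable]
        · simp
        · simpa using hsum_mean
    _ = ∑ i, c i ^ 2 * variance (ε i) P := by
        rw [IndepFun.variance_sum (fun i _ => hZ i) hpair]
        exact Finset.sum_congr rfl fun i _ => variance_const_mul _ _ _
    _ = σ ^ 2 * ∑ i, c i ^ 2 := by
        simp only [variance_of_integral_eq_zero (hL2 _).aemeasurable (hmean _), hvar,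
          Finset.mul_sum, mul_comm]

theorem stmt_12_general {H : Type*} [NormedAddCommGroup H] [InnerProductSpace ℝ H]
    {Ω : Type*} [MeasurableSpace Ω] (P : Measure Ω) [IsProbabilityMeasure P]
    (n J : ℕ) (hn : 0 < n) (X : Fin n → H)
    (Xbar : H) (hXbar : Xbar = (n : ℝ)⁻¹ • ∑ i, X i)
    (γhat : H →L[ℝ] H)
    (hγhat : γhat = (n : ℝ)⁻¹ • ∑ i, rankOne (X i - Xbar) (X i - Xbar))
    (φ : Fin J → H) (hortho : Orthonormal ℝ φ)
    (γv : Fin J → ℝ) (hpos : ∀ j, 0 < γv j) (heig : ∀ j, γhat (φ j) = γv j • φ j)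
    (ε : Fin n → Ω → ℝ)
    (hindep : iIndepFun ε P)
    (hL2 : ∀ i, MemLp (ε i) 2 P)
    (σ : ℝ) (hmean : ∀ i, ∫ ω, ε i ω ∂P = 0) (hvar : ∀ i, ∫ ω, (ε i ω) ^ 2 ∂P = σ ^ 2)
    (Shalf : H →L[ℝ] H)
    (hShalf : Shalf = ∑ j, (Real.sqrt (γv j))⁻¹ • rankOne (φ j) (φ j))
    (U : Ω → H)
    (hU : ∀ ω, U ω =
      (n : ℝ)⁻¹ • ∑ i, (ε i ω - (n : ℝ)⁻¹ * ∑ k, ε k ω) • (X i - Xbar)) :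
    ∫ ω, ‖Shalf (U ω)‖ ^ 2 ∂P = σ ^ 2 * J / n := by
  have hY : ∑ i, (X i - Xbar) = 0 := by
    have : Nonempty (Fin n) := ⟨⟨0, hn⟩⟩
    simpa only [hXbar, Fintype.card_fin] using sum_sub_card_inv_smul_sum X
  have hcoord : ∀ j, ∑ i, ⟪X i - Xbar, φ j⟫ ^ 2 = n * γv j := fun j => by
    have h := congrArg (⟪·, φ j⟫) (heig j)
    simp only [hγhat, smul_apply, real_inner_smul_left,
      inner_sum_rankOne_self_apply, real_inner_self_eq_norm_sq, hortho.1 j] at h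
    field_simp at h
    linarith
  have hUφ : ∀ j ω, ⟪U ω, φ j⟫ = ∑ i, ((n : ℝ)⁻¹ * ⟪X i - Xbar, φ j⟫) * ε i ω := by
    intro j ω
    rw [hU, sum_sub_smul_of_sum_eq_zero _ hY, real_inner_smul_left, sum_inner, Finset.mul_sum]
    exact Finset.sum_congr rfl fun i _ => by rw [real_inner_smul_left]; ring
  have hmoment : ∀ j, ∫ ω, ⟪U ω, φ j⟫ ^ 2 ∂P = σ ^ 2 * γv j / n := fun j => by
    simp only [hUφ j, integral_sq_sum_const_mul_of_iIndepFun hindep hL2 hmean hvar, mul_pow,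
      ← Finset.mul_sum, hcoord]
    field_simp
  have hintegrable : ∀ j, Integrable (fun ω => ⟪U ω, φ j⟫ ^ 2) P := fun j => by
    simpa only [hUφ j] using (memLp_finsetSum _ fun i _ => (hL2 i).const_mul _).integrable_sq
  have hnorm : ∀ ω, ‖Shalf (U ω)‖ ^ 2 = ∑ j, (γv j)⁻¹ * ⟪U ω, φ j⟫ ^ 2 := fun ω => by
    simp only [hShalf, hortho.norm_sum_smul_rankOne_apply_sq, inv_pow, Real.sq_sqrt (hpos _).le]
  calc ∫ ω, ‖Shalf (U ω)‖ ^ 2 ∂P = ∑ j, (γv j)⁻¹ * ∫ ω, ⟪U ω, φ j⟫ ^ 2 ∂P := by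
        simp only [hnorm, integral_finsetSum _ fun j _ => (hintegrable j).const_mul _,
          integral_const_mul]
    _ = ∑ _j : Fin J, σ ^ 2 / n :=
        Finset.sum_congr rfl fun j _ => by rw [hmoment]; field_simp [(hpos j).ne']
    _ = σ ^ 2 * J / n := by
        rw [Finset.sum_const, Finset.card_univ, Fintype.card_fin, nsmul_eq_mul]
        ring

/-- With i.i.d. centered errors of variance `σ²`, fixed regressors `X₁,…,X_n`, and
`γ̂_J^{-1/2} = Σ_{j≤J} γ̂_j^{-1/2} φ̂_j ⊗ φ̂_j`, one has
`E[‖γ̂_J^{-1/2} U_n‖²] = σ² J / n`, where `U_n = n⁻¹ Σᵢ (Xᵢ − X̄)(εᵢ − ε̄)`. -/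
theorem stmt_12 {H : Type*} [NormedAddCommGroup H] [InnerProductSpace ℝ H]
    {Ω : Type*} [MeasurableSpace Ω] (P : Measure Ω) [IsProbabilityMeasure P]
    (n J : ℕ) (hn : 0 < n) (X : Fin n → H)
    (Xbar : H) (hXbar : Xbar = (n : ℝ)⁻¹ • ∑ i, X i)
    (γhat : H →L[ℝ] H)
    (hγhat : γhat = (n : ℝ)⁻¹ • ∑ i, rankOne (X i - Xbar) (X i - Xbar))
    (φ : Fin J → H) (hortho : Orthonormal ℝ φ)
    (γv : Fin J → ℝ) (hpos : ∀ j, 0 < γv j) (heig : ∀ j, γhat (φ j) = γv j • φ j)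
    (ε : Fin n → Ω → ℝ) (hmeas : ∀ i, Measurable (ε i))
    (hindep : iIndepFun ε P)
    (hident : ∀ i i' : Fin n, P.map (ε i) = P.map (ε i'))
    (hL2 : ∀ i, MemLp (ε i) 2 P)
    (σ : ℝ) (hmean : ∀ i, ∫ ω, ε i ω ∂P = 0) (hvar : ∀ i, ∫ ω, (ε i ω) ^ 2 ∂P = σ ^ 2)
    (Shalf : H →L[ℝ] H)
    (hShalf : Shalf = ∑ j, (Real.sqrt (γv j))⁻¹ • rankOne (φ j) (φ j))
    (U : Ω → H)
    (hU : ∀ ω, U ω =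
      (n : ℝ)⁻¹ • ∑ i, (ε i ω - (n : ℝ)⁻¹ * ∑ k, ε k ω) • (X i - Xbar)) :
    ∫ ω, ‖Shalf (U ω)‖ ^ 2 ∂P = σ ^ 2 * J / n :=
  stmt_12_general P n J hn X Xbar hXbar γhat hγhat φ hortho γv hpos heig ε hindep hL2 σ hmean hvar
    Shalf hShalf U hU
end

section
/- Let F be the distribution function of a real random variable with finite second moment and G a differentiable distribution function with bounded derivative. If a sequence of distributions P_n converges to Q in second-order Wasserstein distance, then F_n converges to G uniformly on ℝ, where F_n and G are the CDFs of P_n and Q. -/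
/-!
Couple `P` and `Q` by a near-optimal `μ` with `∫ ‖x - y‖² dμ < δ²`. Off the event `|x - y| ≥ η`,
`x ≤ s` forces `y < s + η`, so `F(s) ≤ G(s + η) + μ{|x - y| ≥ η}`, and symmetrically; the CDF `G`
is `L`-Lipschitz and Chebyshev bounds the exceptional event by `δ² / η²`. The choice `η = √δ`
gives `|F(s) - G(s)| ≤ L √δ + δ` for every `δ > W₂(P, Q)`, uniformly in `s`.
-/

open MeasureTheory Set Filter Topology

/-- The second-order Wasserstein distance between two measures on a normed space. -/
noncomputable def W2 {B : Type*} [NormedAddCommGroup B] [MeasurableSpace B]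
    (P Q : Measure B) : ℝ :=
  sInf { r | ∃ μ : Measure (B × B), IsProbabilityMeasure μ ∧
    μ.map Prod.fst = P ∧ μ.map Prod.snd = Q ∧
    r = (∫ p, ‖p.1 - p.2‖ ^ 2 ∂μ) ^ (1/2 : ℝ) }

section Wasserstein

variable {B : Type*} [NormedAddCommGroup B] [MeasurableSpace B]

lemma W2_nonneg (P Q : Measure B) : 0 ≤ W2 P Q := by
  refine Real.sInf_nonneg fun r ⟨μ, _, _, _, hr⟩ => hr ▸ ?_
  exact Real.rpow_nonneg (integral_nonneg fun p => by positivity) _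

lemma exists_coupling_integral_lt_sq_of_W2_lt {P Q : Measure B}
    [IsProbabilityMeasure P] [IsProbabilityMeasure Q] {δ : ℝ} (h : W2 P Q < δ) :
    ∃ μ : Measure (B × B), IsProbabilityMeasure μ ∧ μ.map Prod.fst = P ∧
      μ.map Prod.snd = Q ∧ ∫ p, ‖p.1 - p.2‖ ^ 2 ∂μ < δ ^ 2 := by
  obtain ⟨_, ⟨μ, hμ, hfst, hsnd, rfl⟩, hrδ⟩ :=
    exists_lt_of_csInf_lt (by exact ⟨_, P.prod Q, inferInstance, by simp, by simp, rfl⟩) h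
  refine ⟨μ, hμ, hfst, hsnd, ?_⟩
  rw [← Real.sqrt_eq_rpow] at hrδ
  exact (Real.sqrt_lt' (lt_of_le_of_lt (Real.sqrt_nonneg _) hrδ)).mp hrδ

end Wasserstein

lemma measureReal_le_integral_norm_sq_div_sq {α E : Type*} [MeasurableSpace α]
    [NormedAddCommGroup E] {μ : Measure α} {h : α → E}
    (hint : Integrable (fun x => ‖h x‖ ^ 2) μ) {η : ℝ} (hη : 0 < η) :
    μ.real {x | η ≤ ‖h x‖} ≤ (∫ x, ‖h x‖ ^ 2 ∂μ) / η ^ 2 := by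
  have hset : {x | η ≤ ‖h x‖} = {x | η ^ 2 ≤ ‖h x‖ ^ 2} := by
    ext x
    exact (pow_le_pow_iff_left₀ hη.le (norm_nonneg _) two_ne_zero).symm
  rw [hset, le_div_iff₀ (by positivity), mul_comm]
  exact mul_meas_ge_le_integral_of_nonneg (Eventually.of_forall fun x => by positivity) hint _

lemma measureReal_preimage_Iic_le_add {α : Type*} [MeasurableSpace α] (μ : Measure α)
    [IsFiniteMeasure μ] (f g : α → ℝ) (s η : ℝ) :
    μ.real (f ⁻¹' Iic s) ≤ μ.real (g ⁻¹' Iic (s + η)) + μ.real {x | η ≤ ‖f x - g x‖} := by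
  refine (measureReal_mono fun x (hx : f x ≤ s) => ?_).trans (measureReal_union_le _ _)
  by_cases hfar : η ≤ ‖f x - g x‖
  · exact Or.inr hfar
  · rw [not_le, Real.norm_eq_abs, abs_lt] at hfar
    exact Or.inl (show g x ≤ s + η by linarith)

lemma integrable_norm_sub_sq_of_map {μ : Measure (ℝ × ℝ)}
    (h₁ : Integrable (fun x => x ^ 2) (μ.map Prod.fst))
    (h₂ : Integrable (fun x => x ^ 2) (μ.map Prod.snd)) :
    Integrable (fun p : ℝ × ℝ => ‖p.1 - p.2‖ ^ 2) μ := by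
  have hfst : Integrable (fun p : ℝ × ℝ => p.1 ^ 2) μ :=
    (integrable_map_measure (by fun_prop) measurable_fst.aemeasurable).mp h₁
  have hsnd : Integrable (fun p : ℝ × ℝ => p.2 ^ 2) μ :=
    (integrable_map_measure (by fun_prop) measurable_snd.aemeasurable).mp h₂
  refine ((hfst.const_mul 2).add (hsnd.const_mul 2)).mono' (by fun_prop)
    (Eventually.of_forall fun p => ?_)
  rw [Real.norm_eq_abs, abs_of_nonneg (by positivity), Real.norm_eq_abs, sq_abs]
  change (p.1 - p.2) ^ 2 ≤ 2 * p.1 ^ 2 + 2 * p.2 ^ 2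
  nlinarith [sq_nonneg (p.1 + p.2)]

lemma abs_sub_le_mul_abs_sub_of_hasDerivAt {f f' : ℝ → ℝ} {L : ℝ}
    (hf : ∀ x, HasDerivAt f (f' x) x) (hf' : ∀ x, |f' x| ≤ L) (a b : ℝ) :
    |f b - f a| ≤ L * |b - a| :=
  convex_univ.norm_image_sub_le_of_norm_hasDerivWithin_le (fun x _ => (hf x).hasDerivWithinAt)
    (fun x _ => hf' x) (mem_univ a) (mem_univ b)

section CDF

variable {P Q : Measure ℝ} {L : ℝ}

lemma abs_cdf_sub_le_of_coupling {μ : Measure (ℝ × ℝ)} [IsProbabilityMeasure μ]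
    (hfst : μ.map Prod.fst = P) (hsnd : μ.map Prod.snd = Q)
    (hint : Integrable (fun p : ℝ × ℝ => ‖p.1 - p.2‖ ^ 2) μ)
    (hLip : ∀ a b, |Q.real (Iic b) - Q.real (Iic a)| ≤ L * |b - a|) {η : ℝ} (hη : 0 < η)
    (s : ℝ) :
    |P.real (Iic s) - Q.real (Iic s)| ≤ L * η + (∫ p, ‖p.1 - p.2‖ ^ 2 ∂μ) / η ^ 2 := by
  have hP t : μ.real (Prod.fst ⁻¹' Iic t) = P.real (Iic t) := by
    rw [← hfst, map_measureReal_apply measurable_fst measurableSet_Iic]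
  have hQ t : μ.real (Prod.snd ⁻¹' Iic t) = Q.real (Iic t) := by
    rw [← hsnd, map_measureReal_apply measurable_snd measurableSet_Iic]
  have hfar := measureReal_le_integral_norm_sq_div_sq hint hη
  have hfar' : μ.real {p : ℝ × ℝ | η ≤ ‖p.2 - p.1‖} = μ.real {p | η ≤ ‖p.1 - p.2‖} := by
    simp_rw [norm_sub_rev]
  have hPQ := measureReal_preimage_Iic_le_add μ Prod.fst Prod.snd s η
  have hQP := measureReal_preimage_Iic_le_add μ Prod.snd Prod.fst (s - η) η
  rw [hP, hQ] at hPQ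
  rw [hP, hQ, hfar', sub_add_cancel] at hQP
  have hright := hLip s (s + η)
  have hleft := hLip (s - η) s
  rw [add_sub_cancel_left, abs_of_pos hη] at hright
  rw [sub_sub_cancel, abs_of_pos hη] at hleft
  rw [abs_le] at hright hleft ⊢
  constructor <;> linarith

lemma abs_cdf_sub_le_of_W2 [IsProbabilityMeasure P] [IsProbabilityMeasure Q]
    (hP2 : Integrable (fun x => x ^ 2) P) (hQ2 : Integrable (fun x => x ^ 2) Q)
    (hLip : ∀ a b, |Q.real (Iic b) - Q.real (Iic a)| ≤ L * |b - a|) (s : ℝ) :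
    |P.real (Iic s) - Q.real (Iic s)| ≤ L * √(W2 P Q) + W2 P Q := by
  have hcont : Tendsto (fun δ => L * √δ + δ) (𝓝[>] (W2 P Q)) (𝓝 (L * √(W2 P Q) + W2 P Q)) :=
    (by fun_prop : Continuous fun δ : ℝ => L * √δ + δ).continuousWithinAt
  refine ge_of_tendsto hcont (eventually_nhdsWithin_of_forall fun δ (hδ : W2 P Q < δ) => ?_)
  have hδ0 : 0 < δ := (W2_nonneg P Q).trans_lt hδ
  obtain ⟨μ, _, hfst, hsnd, hμδ⟩ := exists_coupling_integral_lt_sq_of_W2_lt hδ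
  have hint := integrable_norm_sub_sq_of_map (hfst ▸ hP2) (hsnd ▸ hQ2)
  calc |P.real (Iic s) - Q.real (Iic s)|
      ≤ L * √δ + (∫ p, ‖p.1 - p.2‖ ^ 2 ∂μ) / √δ ^ 2 :=
        abs_cdf_sub_le_of_coupling hfst hsnd hint hLip (Real.sqrt_pos.mpr hδ0) s
    _ ≤ L * √δ + δ := by
        rw [Real.sq_sqrt hδ0.le]
        gcongr
        rw [div_le_iff₀ hδ0, ← sq]
        exact hμδ.le

end CDF

/-- If the CDF `G` of `Q` is differentiable with bounded derivative and `P_n → Q` in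
second-order Wasserstein distance, then the CDFs `F_n` of `P_n` converge to `G`
uniformly on `ℝ`. -/
theorem stmt_18 (P : ℕ → Measure ℝ) (Q : Measure ℝ)
    [∀ n, IsProbabilityMeasure (P n)] [IsProbabilityMeasure Q]
    (h2 : ∀ n, Integrable (fun x => x ^ 2) (P n)) (hQ2 : Integrable (fun x => x ^ 2) Q)
    (G' : ℝ → ℝ) (L : ℝ)
    (hG : ∀ s, HasDerivAt (fun t => (Q (Set.Iic t)).toReal) (G' s) s)
    (hL : ∀ s, |G' s| ≤ L)
    (hW : Filter.Tendsto (fun n => W2 (P n) Q) Filter.atTop (nhds 0)) :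
    TendstoUniformly (fun n s => ((P n) (Set.Iic s)).toReal)
      (fun s => (Q (Set.Iic s)).toReal) Filter.atTop := by
  have hLip := abs_sub_le_mul_abs_sub_of_hasDerivAt hG hL
  have hbound : Tendsto (fun n => L * √(W2 (P n) Q) + W2 (P n) Q) atTop (𝓝 0) := by
    simpa using (hW.sqrt.const_mul L).add hW
  rw [Metric.tendstoUniformly_iff]
  intro ε hε
  filter_upwards [hbound.eventually (gt_mem_nhds hε)] with n hn s
  rw [Real.dist_eq, abs_sub_comm]
  exact (abs_cdf_sub_le_of_W2 (h2 n) hQ2 hLip s).trans_lt hn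
end
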